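/- arXiv:1410.0099 — 2 statements merged into one kernel-verified Lean document; each statement's English description precedes it below -/
import Mathlib

section
/- Let (V,P) be a mixing Markov chain. For every ε > 0 there exists T > 0 such that for all n and all u, v ∈ V_n, the probability under μ×μ that x_{n+T}^{2n+T-1} = y_{n+T}^{2n+T-1} given x_1^n = u and y_1^n = v is at least (1−ε)·Δ_n. -/
open Finset Filter
open scoped ENNReal

noncomputable section

variable {V : Type*}

/-- `P` is a stochastic transition matrix. -/
def IsStochastic [Fintype V] (P : Matrix V V ℝ) : Prop :=
  (∀ u v, 0 ≤ P u v) ∧ ∀ u, ∑ v, P u v = 1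

/-- The chain `(V,P)` is mixing: some power of `P` has all entries positive. -/
def IsMixing [Fintype V] [DecidableEq V] (P : Matrix V V ℝ) : Prop :=
  ∃ n : ℕ, 0 < n ∧ ∀ u v, 0 < (P ^ n) u v

/-- `pi` is a stationary distribution for `P`. -/
def IsStationaryPi [Fintype V] (P : Matrix V V ℝ) (pi : V → ℝ) : Prop :=
  (∀ v, 0 ≤ pi v) ∧ (∑ v, pi v = 1) ∧ ∀ v, ∑ u, pi u * P u v = pi v

/-- One step of the chain killed on the set `B`. -/
def killedStep [Fintype V] [DecidableEq V] (P : Matrix V V ℝ) (B : Finset V) (ν : V → ℝ) : V → ℝ :=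
  fun v => ∑ u, if u ∈ B then 0 else ν u * P u v

/-- `avoidProb P B ν t = P_ν(T_B > t)`, the probability that the chain with initial
distribution `ν` avoids `B` at all times `0,…,t`; here `T_B = inf {t ≥ 0 : X_t ∈ B}`. -/
def avoidProb [Fintype V] [DecidableEq V] (P : Matrix V V ℝ) (B : Finset V) (ν : V → ℝ) (t : ℕ) : ℝ :=
  ∑ u, if u ∈ B then 0 else ((killedStep P B)^[t] ν) u

/-- Point mass at `v`. -/
def pointMass [DecidableEq V] (v : V) : V → ℝ := fun u => if u = v then 1 else 0

/-- `E_v(T_B)`, as an extended real (infinite if `B` is not reachable). -/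
def hitExp [Fintype V] [DecidableEq V] (P : Matrix V V ℝ) (B : Finset V) (v : V) : ℝ≥0∞ :=
  ∑' t : ℕ, ENNReal.ofReal (avoidProb P B (pointMass v) t)

/-- `m_B = max_v E_v(T_B)`. -/
def maxHitExp [Fintype V] [DecidableEq V] (P : Matrix V V ℝ) (B : Finset V) : ℝ≥0∞ :=
  ⨆ v : V, hitExp P B v

/-- Transition matrix of two independent walkers. -/
def prodMatrix (P : Matrix V V ℝ) : Matrix (V × V) (V × V) ℝ :=
  fun p q => P p.1 q.1 * P p.2 q.2

/-- The diagonal of `V × V`. -/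
def diagSet (V : Type*) [Fintype V] [DecidableEq V] : Finset (V × V) :=
  univ.filter fun p => p.1 = p.2

/-- `P(m(u,v) > t)`: the probability that two independent walkers started at `u` and `v`
have not met by time `t`. -/
def meetSurvival [Fintype V] [DecidableEq V] (P : Matrix V V ℝ) (u v : V) (t : ℕ) : ℝ :=
  avoidProb (prodMatrix P) (diagSet V) (pointMass (u, v)) t

/-- `E(m(u,v))`, the expected meeting time of walkers started at `u`, `v`. -/
def meetExp [Fintype V] [DecidableEq V] (P : Matrix V V ℝ) (u v : V) : ℝ :=
  ∑' t : ℕ, meetSurvival P u v t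

/-- `m* = max_{u,v} E(m(u,v))`. -/
def maxMeetExp [Fintype V] [DecidableEq V] (P : Matrix V V ℝ) : ℝ :=
  ⨆ p : V × V, meetExp P p.1 p.2

/-- `m̄ = Σ_{u,v} pi(u) pi(v) E(m(u,v))`. -/
def meanMeetExp [Fintype V] [DecidableEq V] (P : Matrix V V ℝ) (pi : V → ℝ) : ℝ :=
  ∑ u, ∑ v, pi u * pi v * meetExp P u v

/-- Transition matrix of the coalescing random walk: the state `f : V → V` records the
current position of the walker started at each site; walkers at the same site move together. -/
def coalMatrix [Fintype V] [DecidableEq V] (P : Matrix V V ℝ) : Matrix (V → V) (V → V) ℝ :=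
  fun f g =>
    if ∀ u v, f u = f v → g u = g v then
      ∏ s ∈ univ.image f, (if h : ∃ u, f u = s then P s (g h.choose) else 0)
    else 0

/-- Constant maps: the coalescing walk has fully coalesced exactly when its state is constant. -/
def constSet (V : Type*) [Fintype V] [DecidableEq V] : Finset (V → V) :=
  univ.filter fun f => ∀ u v : V, f u = f v

/-- `P(C > t)`: the probability that the coalescing random walk started with one walker on
each state has not fully coalesced by time `t`. -/
def coalSurvival [Fintype V] [DecidableEq V] (P : Matrix V V ℝ) (t : ℕ) : ℝ :=
  avoidProb (coalMatrix P) (constSet V) (pointMass id) t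

/-- `E(C)`, the expected full coalescence time. -/
def coalExp [Fintype V] [DecidableEq V] (P : Matrix V V ℝ) : ℝ :=
  ∑' t : ℕ, coalSurvival P t

/-- `E(C²)`, via the tail-sum formula `E(C²) = Σ_{t≥0} P(C > √t)`. -/
def coalMoment2 [Fintype V] [DecidableEq V] (P : Matrix V V ℝ) : ℝ :=
  ∑' t : ℕ, coalSurvival P (Nat.sqrt t)

/-- `μ(w) = pi(w_1) ∏ P(w_j, w_{j+1})`, the stationary measure of the word `w`. -/
def wordProb [Fintype V] (pi : V → ℝ) (P : Matrix V V ℝ) {n : ℕ} (w : Fin (n + 1) → V) : ℝ :=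
  pi (w 0) * ∏ i : Fin n, P (w i.castSucc) (w i.succ)

/-- The state space `V_n` of the `n`-block chain: words of length `n+1` of positive measure. -/
abbrev BlockStates [Fintype V] (pi : V → ℝ) (P : Matrix V V ℝ) (n : ℕ) : Type _ :=
  {w : Fin (n + 1) → V // 0 < wordProb pi P w}

/-- The transition matrix `P_n` of the `n`-block chain. -/
def blockMatrix [Fintype V] [DecidableEq V] (pi : V → ℝ) (P : Matrix V V ℝ) (n : ℕ) :
    Matrix (BlockStates pi P n) (BlockStates pi P n) ℝ :=
  fun u v =>
    if ∀ i : Fin n, u.1 i.succ = v.1 i.castSucc then P (u.1 (Fin.last n)) (v.1 (Fin.last n))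
    else 0

/-- The stationary distribution `π_n` of the `n`-block chain. -/
def blockPi [Fintype V] (pi : V → ℝ) (P : Matrix V V ℝ) (n : ℕ) :
    BlockStates pi P n → ℝ :=
  fun w => wordProb pi P w.1

/-- `Δ_n = Σ_{u ∈ V_n} μ(u)²`. -/
def blockDelta [Fintype V] (pi : V → ℝ) (P : Matrix V V ℝ) (n : ℕ) : ℝ :=
  ∑ w : Fin (n + 1) → V, (wordProb pi P w) ^ 2

/-- The entropy `h(V,P) = -Σ_{u,v} pi(u) P(u,v) log P(u,v)`. -/
def chainEntropy [Fintype V] (P : Matrix V V ℝ) (pi : V → ℝ) : ℝ :=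
  -∑ u, ∑ v, pi u * P u v * Real.log (P u v)

/-!
Summing out all letters outside the two observed blocks (the Markov property), the weight of
`x_1^n = u` together with a block `a` starting `T` steps after `u_n` is
`μ(u) P^T(u_n, a_1) μ(a) / pi(a_1)`.
Hence the quantity to bound is `μ(u) μ(v) Σ_a P^T(u_n, a_1) P^T(v_n, a_1) (μ(a) / pi(a_1))²`.
Mixing gives, by Doeblin's minorization argument, a `T > 0` with `P^T(x, s) ≥ (1 - δ) pi(s)` for
all `x, s`, so each term is at least `(1 - δ)² μ(u) μ(v) μ(a)²`.
-/

open Matrix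

section Chain

variable [Fintype V] [DecidableEq V] {P Q : Matrix V V ℝ} {pi : V → ℝ}

lemma IsStochastic.mem_rowStochastic (hP : IsStochastic P) : P ∈ rowStochastic ℝ V :=
  mem_rowStochastic_iff_sum.2 hP

lemma IsStochastic.pow (hP : IsStochastic P) (k : ℕ) : IsStochastic (P ^ k) :=
  mem_rowStochastic_iff_sum.1 (pow_mem hP.mem_rowStochastic k)

lemma IsStationaryPi.pow (hpi : IsStationaryPi P pi) (k : ℕ) : IsStationaryPi (P ^ k) pi := by
  refine ⟨hpi.1, hpi.2.1, fun s => ?_⟩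
  suffices pi ᵥ* (P ^ k) = pi from congrFun this s
  induction k with
  | zero => simp
  | succ k ih => rw [pow_succ, ← vecMul_vecMul, ih]; exact funext hpi.2.2

/-- Doeblin: the `θ • pi` part of every step of `Q` is already stationary, so at most a
`(1 - θ)` fraction of the mass is still unmixed after each step. -/
lemma IsStochastic.le_pow_apply_of_minorization (hQ : IsStochastic Q) (hpi : IsStationaryPi Q pi)
    {θ : ℝ} (hθ : ∀ x s, θ * pi s ≤ Q x s) (k : ℕ) (x s : V) :
    (1 - (1 - θ) ^ k) * pi s ≤ (Q ^ k) x s := by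
  induction k generalizing s with
  | zero => simpa using (hQ.pow 0).1 x s
  | succ k ih =>
    have hstep : ∀ t, (1 - (1 - θ) ^ k) * pi t * (Q t s - θ * pi s) + (Q ^ k) x t * (θ * pi s)
        ≤ (Q ^ k) x t * Q t s := fun t => by
      nlinarith [mul_le_mul_of_nonneg_right (ih t) (sub_nonneg.2 (hθ t s))]
    calc (1 - (1 - θ) ^ (k + 1)) * pi s
        = ∑ t, ((1 - (1 - θ) ^ k) * pi t * (Q t s - θ * pi s) + (Q ^ k) x t * (θ * pi s)) := by
          have hrow : ∑ t, (Q ^ k) x t = 1 := (hQ.pow k).2 x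
          rw [← sum_congr rfl fun t _ => (by ring : (1 - (1 - θ) ^ k) * (pi t * Q t s)
              - (1 - (1 - θ) ^ k) * θ * pi s * pi t + θ * pi s * (Q ^ k) x t = _),
            sum_add_distrib, sum_sub_distrib, ← mul_sum, ← mul_sum, ← mul_sum, hpi.2.2 s,
            hpi.2.1, hrow]
          ring
      _ ≤ ∑ t, (Q ^ k) x t * Q t s := sum_le_sum fun t _ => hstep t
      _ = (Q ^ (k + 1)) x s := by rw [pow_succ, mul_apply]

lemma IsMixing.exists_pow_ge_stationary (hP : IsStochastic P) (hmix : IsMixing P)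
    (hpi : IsStationaryPi P pi) {δ : ℝ} (hδ : 0 < δ) :
    ∃ T, 0 < T ∧ ∀ x s, (1 - δ) * pi s ≤ (P ^ T) x s := by
  obtain ⟨m, hm, hpos⟩ := hmix
  have : Nonempty V := by
    by_contra h
    rw [not_nonempty_iff] at h
    simpa using hpi.2.1
  obtain ⟨p, hp⟩ := Finite.exists_min fun p : V × V => (P ^ m) p.1 p.2
  set θ := (P ^ m) p.1 p.2
  have hθ : ∀ x s, θ * pi s ≤ (P ^ m) x s := fun x s => by
    have hpi_le : pi s ≤ 1 := hpi.2.1 ▸ single_le_sum (fun t _ => hpi.1 t) (mem_univ s)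
    nlinarith [hp (x, s), hpi.1 s, hpos p.1 p.2]
  have hθ1 : θ ≤ 1 := le_one_of_mem_rowStochastic (hP.pow m).mem_rowStochastic
  obtain ⟨k, hk⟩ := exists_pow_lt_of_lt_one hδ (by linarith [hpos p.1 p.2] : 1 - θ < 1)
  refine ⟨m * (k + 1), by positivity, fun x s => ?_⟩
  have hdecay : (1 - θ) ^ (k + 1) ≤ (1 - θ) ^ k :=
    pow_le_pow_of_le_one (by linarith) (by linarith [hpos p.1 p.2]) k.le_succ
  calc (1 - δ) * pi s ≤ (1 - (1 - θ) ^ (k + 1)) * pi s := by nlinarith [hpi.1 s]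
    _ ≤ ((P ^ m) ^ (k + 1)) x s :=
      (hP.pow m).le_pow_apply_of_minorization (hpi.pow m) hθ (k + 1) x s
    _ = (P ^ (m * (k + 1))) x s := by rw [pow_mul]

end Chain

section Words

variable (pi : V → ℝ) (P : Matrix V V ℝ)

def pathProb {n : ℕ} (w : Fin (n + 1) → V) : ℝ :=
  ∏ i : Fin n, P (w i.castSucc) (w i.succ)

lemma wordProb_eq_mul_pathProb [Fintype V] {n : ℕ} (w : Fin (n + 1) → V) :
    wordProb pi P w = pi (w 0) * pathProb P w := rfl

lemma pathProb_snoc {m : ℕ} (w : Fin (m + 1) → V) (b : V) :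
    pathProb P (Fin.snoc w b : Fin (m + 1 + 1) → V) = pathProb P w * P (w (Fin.last m)) b := by
  simp only [pathProb, Fin.prod_univ_castSucc, Fin.succ_castSucc, Fin.snoc_castSucc,
    Fin.succ_last, Fin.snoc_last]

lemma wordProb_snoc [Fintype V] {m : ℕ} (w : Fin (m + 1) → V) (b : V) :
    wordProb pi P (Fin.snoc w b : Fin (m + 1 + 1) → V) =
      wordProb pi P w * P (w (Fin.last m)) b := by
  rw [wordProb_eq_mul_pathProb, pathProb_snoc, wordProb_eq_mul_pathProb, ← Fin.castSucc_zero,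
    Fin.snoc_castSucc, mul_assoc]

lemma pathProb_append {m k : ℕ} (x : Fin (m + 1) → V) (a : Fin (k + 1) → V) :
    pathProb P (n := m + 1 + k) (Fin.append (m := m + 1) (n := k + 1) x a) =
      pathProb P x * P (x (Fin.last m)) (a 0) * pathProb P a := by
  induction k with
  | zero => rw [Fin.append_right_eq_snoc, pathProb_snoc]; simp [pathProb]
  | succ k ih =>
    refine Fin.snocCases (fun a b => ?_) a
    have hlast : Fin.append x a (Fin.last _) = a (Fin.last k) :=
      Fin.append_right x a (Fin.last k)
    have hfirst : (Fin.snoc a b : Fin (k + 1 + 1) → V) 0 = a 0 :=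
      Fin.snoc_castSucc (α := fun _ => V) (i := 0) ..
    rw [Fin.append_snoc, pathProb_snoc, ih, pathProb_snoc, hlast, hfirst]
    ring

lemma wordProb_append [Fintype V] {m k : ℕ} (x : Fin (m + 1) → V) (a : Fin (k + 1) → V) :
    wordProb pi P (n := m + 1 + k) (Fin.append (m := m + 1) (n := k + 1) x a) =
      wordProb pi P x * P (x (Fin.last m)) (a 0) * pathProb P a := by
  have hfirst : Fin.append x a 0 = x 0 := Fin.append_left x a 0
  rw [wordProb_eq_mul_pathProb, pathProb_append, wordProb_eq_mul_pathProb, hfirst]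
  ring

lemma sum_fun_fin_succ_eq_sum_snoc [Fintype V] {M : Type*} [AddCommMonoid M] {m : ℕ}
    (f : (Fin (m + 1) → V) → M) :
    ∑ x, f x = ∑ y : Fin m → V, ∑ b : V, f (Fin.snoc y b) := by
  rw [← (Fin.snocEquiv fun _ => V).sum_comp, Fintype.sum_prod_type, sum_comm]
  rfl

end Words

section Blocks

variable [Fintype V] [DecidableEq V] (pi : V → ℝ) (P : Matrix V V ℝ)

lemma sum_wordProb_mul_apply_last {n : ℕ} (g : (Fin (n + 1) → V) → ℝ) (S : ℕ)
    (φ : V → ℝ) :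
    ∑ x : Fin (n + S + 1) → V,
        g (Fin.take (n + 1) (by omega) x) * wordProb pi P x * φ (x (Fin.last _)) =
      ∑ y : Fin (n + 1) → V, g y * wordProb pi P y * (P ^ S *ᵥ φ) (y (Fin.last n)) := by
  induction S generalizing φ with
  | zero => simp
  | succ S ih =>
    have htake : ∀ (y : Fin (n + S + 1) → V) b,
        Fin.take (n + 1) (by omega) (Fin.snoc y b : Fin (n + S + 1 + 1) → V) =
          Fin.take (n + 1) (by omega) y := fun y b => by
      rw [← Fin.take_init, Fin.init_snoc]
    show ∑ x : Fin (n + S + 1 + 1) → V, _ * _ * φ (x (Fin.last (n + S + 1))) = _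
    rw [sum_fun_fin_succ_eq_sum_snoc]
    simp only [htake, wordProb_snoc, Fin.snoc_last]
    rw [pow_succ, ← mulVec_mulVec, ← ih]
    refine sum_congr rfl fun y _ => ?_
    simp only [mulVec, dotProduct, mul_sum]
    exact sum_congr rfl fun b _ => by ring

lemma sum_wordProb_prefix_block {N : ℕ} (n k T : ℕ) (hN : N = n + T + k) (hT : 0 < T)
    (u : Fin (n + 1) → V) (a : Fin (k + 1) → V) :
    ∑ w : Fin (N + 1) → V,
      (if (fun i : Fin (n + 1) => w ⟨i, by omega⟩) = u ∧
          (fun i : Fin (k + 1) => w ⟨n + T + i, by omega⟩) = a then wordProb pi P w else 0)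
      = wordProb pi P u * (P ^ T) (u (Fin.last n)) (a 0) * pathProb P a := by
  subst hN
  obtain ⟨S, rfl⟩ : ∃ S, T = S + 1 := ⟨T - 1, by omega⟩
  have hpre : ∀ (x : Fin (n + S + 1) → V) (y : Fin (k + 1) → V),
      (fun i : Fin (n + 1) => Fin.append x y ⟨i, by omega⟩) = Fin.take (n + 1) (by omega) x :=
    fun x y => funext fun i => Fin.append_left x y (Fin.castLE _ i)
  have hblk : ∀ (x : Fin (n + S + 1) → V) (y : Fin (k + 1) → V),
      (fun i : Fin (k + 1) => Fin.append x y ⟨n + (S + 1) + i, by omega⟩) = y :=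
    fun x y => funext fun i => Fin.append_right x y i
  show ∑ w : Fin (n + S + 1 + (k + 1)) → V, _ = _
  rw [← (Fin.appendEquiv (n + S + 1) (k + 1)).sum_comp, Fintype.sum_prod_type]
  simp only [Fin.appendEquiv_apply, hpre, hblk, and_comm (b := _ = a), ite_and,
    Fintype.sum_ite_eq']
  have hcol : (P ^ (S + 1)) (u (Fin.last n)) (a 0) =
      (P ^ S *ᵥ fun t => P t (a 0)) (u (Fin.last n)) := by
    rw [pow_succ, mul_apply]; rfl
  have hCK := sum_wordProb_mul_apply_last pi P (fun y => if y = u then 1 else 0) S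
    (fun t => P t (a 0))
  simp only [ite_mul, one_mul, zero_mul, Fintype.sum_ite_eq'] at hCK
  rw [hcol, ← hCK, sum_mul]
  refine sum_congr rfl fun x _ => ?_
  rw [ite_mul, zero_mul]
  exact if_congr Iff.rfl (wordProb_append pi P x a) rfl

end Blocks

lemma sum_sum_ite_and_eq_sum_mul {α β γ R : Type*} [Fintype α] [Fintype β] [Fintype γ]
    [DecidableEq γ] [CommSemiring R] (p : α → Prop) (q : β → Prop) [DecidablePred p]
    [DecidablePred q] (f : α → γ) (g : β → γ) (F : α → R) (G : β → R) :
    ∑ a, ∑ b, (if (p a ∧ q b) ∧ f a = g b then F a * G b else 0) =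
      ∑ c, (∑ a, if p a ∧ f a = c then F a else 0) *
        (∑ b, if q b ∧ g b = c then G b else 0) := by
  simp_rw [sum_mul_sum]
  symm
  rw [sum_comm]
  refine sum_congr rfl fun a _ => ?_
  rw [sum_comm]
  refine sum_congr rfl fun b _ => ?_
  rw [sum_eq_single (f a)]
  · rw [ite_zero_mul_ite_zero]
    exact if_congr ⟨fun h => ⟨⟨h.1.1, h.2.1⟩, h.2.2.symm⟩,
      fun h => ⟨⟨h.1.1, rfl⟩, h.1.2, h.2.symm⟩⟩ rfl rfl
  · intro c _ hc
    simp [Ne.symm hc]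
  · simp

/-- for every `ε > 0` there is `T > 0` such that for all `n` and all words
`u, v` of length `n+1` with positive measure, the `μ×μ`-probability that two stationary
paths start with blocks `u`, `v` and agree on the block of length `n+1` starting at
position `n+1+T` is at least `(1-ε)·Δ_n·μ(u)·μ(v)` — i.e., the conditional probability of
the later blocks agreeing given the initial blocks is at least `(1-ε)·Δ_n`. -/
theorem conditional_meeting_bound [Fintype V] [DecidableEq V] (P : Matrix V V ℝ)
    (hP : IsStochastic P) (hmix : IsMixing P) (pi : V → ℝ) (hpi : IsStationaryPi P pi) :
    ∀ ε > (0 : ℝ), ∃ T : ℕ, 0 < T ∧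
      ∀ (n : ℕ) (u v : Fin (n + 1) → V), 0 < wordProb pi P u → 0 < wordProb pi P v →
        (1 - ε) * blockDelta pi P n * (wordProb pi P u * wordProb pi P v) ≤
          ∑ w : Fin (2 * n + T + 1) → V, ∑ z : Fin (2 * n + T + 1) → V,
            if (∀ i : Fin (n + 1),
                  w ⟨i.1, by have := i.isLt; omega⟩ = u i ∧
                  z ⟨i.1, by have := i.isLt; omega⟩ = v i) ∧
               (∀ i : Fin (n + 1),
                  w ⟨n + T + i.1, by have := i.isLt; omega⟩ =
                  z ⟨n + T + i.1, by have := i.isLt; omega⟩)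
            then wordProb pi P w * wordProb pi P z else 0 := by
  intro ε hε
  obtain ⟨δ, hδ, hδ1, hδε⟩ : ∃ δ : ℝ, 0 < δ ∧ δ ≤ 1 ∧ 1 - ε ≤ (1 - δ) ^ 2 :=
    ⟨min ε 1 / 2, by positivity, by linarith [min_le_right ε 1],
      by nlinarith [min_le_left ε 1, sq_nonneg (min ε 1)]⟩
  obtain ⟨T, hT, hPT⟩ := hmix.exists_pow_ge_stationary hP hpi hδ
  refine ⟨T, hT, fun n u v hu hv => ?_⟩
  simp only [forall_and, ← funext_iff]
  rw [sum_sum_ite_and_eq_sum_mul]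
  simp only [sum_wordProb_prefix_block (N := 2 * n + T) pi P n n T (by ring) hT]
  rw [blockDelta, mul_sum, sum_mul]
  refine sum_le_sum fun c _ => ?_
  have hmeet : (1 - ε) * pi (c 0) ^ 2 ≤
      (P ^ T) (u (Fin.last n)) (c 0) * (P ^ T) (v (Fin.last n)) (c 0) :=
    calc (1 - ε) * pi (c 0) ^ 2 ≤ ((1 - δ) * pi (c 0)) * ((1 - δ) * pi (c 0)) := by
          nlinarith [sq_nonneg (pi (c 0))]
      _ ≤ _ := mul_le_mul (hPT _ _) (hPT _ _) (mul_nonneg (by linarith) (hpi.1 _))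
          ((hP.pow T).1 _ _)
  calc (1 - ε) * wordProb pi P c ^ 2 * (wordProb pi P u * wordProb pi P v)
      = ((1 - ε) * pi (c 0) ^ 2) * (wordProb pi P u * wordProb pi P v * pathProb P c ^ 2) := by
        rw [wordProb_eq_mul_pathProb]; ring
    _ ≤ ((P ^ T) (u (Fin.last n)) (c 0) * (P ^ T) (v (Fin.last n)) (c 0)) *
          (wordProb pi P u * wordProb pi P v * pathProb P c ^ 2) := by gcongr
    _ = _ := by ring
end
end

section
/- Let (V,P) be a mixing Markov chain. Then L(V,P) > 0 if and only if |V| > 1. In particular, if |V| > 1 there exists δ > 0 such that for all sufficiently large n, Δ_n = Σ_{u ∈ V_n} μ(u)² ≤ e^{−δn}. -/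
open Finset Filter
open scoped ENNReal

noncomputable section

variable {V : Type*}

/-- `pi` is a stationary distribution for `P`. -/
def IsStationaryDist [Fintype V] (P : Matrix V V ℝ) (pi : V → ℝ) : Prop :=
  (∀ v, 0 ≤ pi v) ∧ (∑ v, pi v = 1) ∧ ∀ v, ∑ u, pi u * P u v = pi v

/-!
Write `Q = P ⊙ P`. A sum of squares of nonnegative numbers is at most the square of their sum,
so `Q^m ≤ (P^m) ⊙ (P^m)` entrywise. If `P^m` is positive and there are at least two states,
every row of `P^m` has all entries in `(0, 1)`, so its squares sum to less than `1`; evaluating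
`Q^m φ = λ^m φ` at a maximum of `φ` then gives `λ^m < 1`; with a single state, `P = Q = (1)` and
`λ = 1`. Finally `Δ_n` is a sum over paths of products of entries of `Q`, so
`(min φ) Δ_n ≤ ⟨π², Q^n φ⟩ = λ^n ⟨π², φ⟩`, which decays exponentially once `λ < 1`.
-/

open Matrix

theorem isStochastic_iff_mem_rowStochastic [Fintype V] [DecidableEq V] {P : Matrix V V ℝ} :
    IsStochastic P ↔ P ∈ rowStochastic ℝ V :=
  mem_rowStochastic_iff_sum.symm

theorem IsStationaryDist.nonempty [Fintype V] {P : Matrix V V ℝ} {pi : V → ℝ}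
    (hpi : IsStationaryDist P pi) : Nonempty V := by
  by_contra h
  rw [not_nonempty_iff] at h
  simpa using hpi.2.1

theorem sum_sq_lt_one_of_pos [Fintype V] (hV : 1 < Fintype.card V) {x : V → ℝ}
    (hx : ∀ v, 0 < x v) (hsum : ∑ v, x v = 1) : ∑ v, x v ^ 2 < 1 := by
  have hlt : ∀ v, x v < 1 := fun v => by
    obtain ⟨w, hw⟩ := Fintype.exists_ne_of_one_lt_card hV v
    exact hsum ▸ Finset.single_lt_sum hw (mem_univ v) (mem_univ w) (hx w)
      fun k _ _ => (hx k).le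
  have : Nonempty V := Fintype.card_pos_iff.1 (by omega)
  calc ∑ v, x v ^ 2 < ∑ v, x v :=
        Finset.sum_lt_sum_of_nonempty univ_nonempty fun v _ =>
          pow_lt_self_of_lt_one₀ (hx v) (hlt v) one_lt_two
    _ = 1 := hsum

section MatrixPowers

variable {R : Type*} [CommSemiring R] [Fintype V] [DecidableEq V]

theorem sum_prod_path_eq_dotProduct_pow_mulVec (Q : Matrix V V R) (f : V → R) (n : ℕ)
    (c : V → R) :
    ∑ w : Fin (n + 1) → V,
        c (w 0) * (∏ i : Fin n, Q (w i.castSucc) (w i.succ)) * f (w (Fin.last n))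
      = c ⬝ᵥ (Q ^ n *ᵥ f) := by
  induction n generalizing c with
  | zero =>
    rw [← (Equiv.funUnique (Fin 1) V).symm.sum_comp]
    simp [dotProduct]
  | succ n ih =>
    rw [← (Fin.consEquiv fun _ => V).sum_comp, Fintype.sum_prod_type, Finset.sum_comm,
      pow_succ', ← mulVec_mulVec, dotProduct_mulVec, ← ih]
    refine Finset.sum_congr rfl fun w _ => ?_
    simp only [Fin.consEquiv_apply, Fin.prod_univ_succ, Fin.castSucc_zero, Fin.cons_zero,
      ← Fin.succ_castSucc, Fin.cons_succ, ← Fin.succ_last, vecMul, dotProduct, Finset.sum_mul]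
    exact Finset.sum_congr rfl fun x _ => by ring

theorem pow_mulVec_of_mulVec_eq_smul {Q : Matrix V V R} {φ : V → R} {lam : R}
    (h : Q *ᵥ φ = lam • φ) (n : ℕ) : Q ^ n *ᵥ φ = lam ^ n • φ := by
  induction n with
  | zero => simp
  | succ n ih => rw [pow_succ', ← mulVec_mulVec, ih, mulVec_smul, h, smul_smul, pow_succ]

variable [PartialOrder R] [IsOrderedRing R]

theorem hadamard_self_pow_apply_le_sq {A : Matrix V V R} (hA : ∀ i j, 0 ≤ A i j) (k : ℕ)
    (i j : V) : ((A ⊙ A) ^ k) i j ≤ (A ^ k) i j ^ 2 := by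
  induction k generalizing j with
  | zero => by_cases h : i = j <;> simp [one_apply, h]
  | succ k ih =>
    rw [pow_succ (A ⊙ A), pow_succ A, mul_apply, mul_apply]
    calc ∑ l, ((A ⊙ A) ^ k) i l * (A ⊙ A) l j ≤ ∑ l, ((A ^ k) i l * A l j) ^ 2 :=
          Finset.sum_le_sum fun l _ => by
            rw [hadamard_apply, mul_pow, sq (A l j)]
            exact mul_le_mul_of_nonneg_right (ih l) (mul_nonneg (hA l j) (hA l j))
      _ ≤ _ := sum_sq_le_sq_sum_of_nonneg fun l _ =>
          mul_nonneg (pow_apply_nonneg hA k i l) (hA l j)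

end MatrixPowers

section Eigenvalue

variable [Fintype V] {P : Matrix V V ℝ} {φ : V → ℝ} {lam : ℝ}

theorem IsStochastic.pos_of_hadamard_self_mulVec_eq_smul [Nonempty V] (hP : IsStochastic P)
    (hφ : ∀ v, 0 < φ v) (heig : (P ⊙ P) *ᵥ φ = lam • φ) : 0 < lam := by
  obtain ⟨u⟩ := ‹Nonempty V›
  obtain ⟨v, -, hv⟩ := Finset.exists_ne_zero_of_sum_ne_zero ((hP.2 u).symm ▸ one_ne_zero)
  have hpos : 0 < ((P ⊙ P) *ᵥ φ) u :=
    Finset.sum_pos' (fun w _ => mul_nonneg (mul_self_nonneg _) (hφ w).le)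
      ⟨v, mem_univ v, mul_pos (mul_self_pos.2 hv) (hφ v)⟩
  rw [heig, Pi.smul_apply, smul_eq_mul] at hpos
  exact pos_of_mul_pos_left hpos (hφ u).le

theorem IsStochastic.eq_one_of_hadamard_self_mulVec_eq_smul [Nonempty V] [Subsingleton V]
    (hP : IsStochastic P) (hφ : ∀ v, 0 < φ v) (heig : (P ⊙ P) *ᵥ φ = lam • φ) : lam = 1 := by
  obtain ⟨u⟩ := ‹Nonempty V›
  have hPu : P u u = 1 := by simpa [Fintype.sum_subsingleton _ u] using hP.2 u
  have hu := congr_fun heig u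
  simp only [mulVec, dotProduct, Fintype.sum_subsingleton _ u, hadamard_apply, hPu, one_mul,
    Pi.smul_apply, smul_eq_mul] at hu
  exact (mul_eq_right₀ (hφ u).ne').1 hu.symm

theorem IsMixing.lt_one_of_hadamard_self_mulVec_eq_smul [DecidableEq V] (hmix : IsMixing P)
    (hP : IsStochastic P) (hV : 1 < Fintype.card V) (hφ : ∀ v, 0 < φ v)
    (heig : (P ⊙ P) *ᵥ φ = lam • φ) : lam < 1 := by
  obtain ⟨m, -, hpos⟩ := hmix
  have hPm : P ^ m ∈ rowStochastic ℝ V := pow_mem (isStochastic_iff_mem_rowStochastic.1 hP) m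
  have : Nonempty V := Fintype.card_pos_iff.1 (by omega)
  obtain ⟨u, hu⟩ := Finite.exists_max φ
  have hlam_m : lam ^ m * φ u < φ u :=
    calc lam ^ m * φ u = ∑ v, ((P ⊙ P) ^ m) u v * φ v := by
          rw [← smul_eq_mul, ← Pi.smul_apply, ← pow_mulVec_of_mulVec_eq_smul heig]; rfl
      _ ≤ ∑ v, (P ^ m) u v ^ 2 * φ u := Finset.sum_le_sum fun v _ =>
          mul_le_mul (hadamard_self_pow_apply_le_sq hP.1 m u v) (hu v) (hφ v).le (sq_nonneg _)
      _ < φ u := by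
          rw [← Finset.sum_mul]
          exact mul_lt_of_lt_one_left (hφ u)
            (sum_sq_lt_one_of_pos hV (hpos u) (sum_row_of_mem_rowStochastic hPm u))
  by_contra! h
  exact ((mul_lt_iff_lt_one_left (hφ u)).1 hlam_m).not_ge (one_le_pow₀ h)

end Eigenvalue

theorem blockDelta_le_mul_pow [Fintype V] [DecidableEq V] [Nonempty V] (pi : V → ℝ)
    {P : Matrix V V ℝ} {φ : V → ℝ} {lam : ℝ} (hφ : ∀ v, 0 < φ v)
    (heig : (P ⊙ P) *ᵥ φ = lam • φ) : ∃ C, ∀ n, blockDelta pi P n ≤ C * lam ^ n := by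
  obtain ⟨u, hu⟩ := Finite.exists_min φ
  refine ⟨(fun v => pi v ^ 2) ⬝ᵥ φ / φ u, fun n => ?_⟩
  rw [div_mul_eq_mul_div, le_div_iff₀ (hφ u)]
  calc blockDelta pi P n * φ u
      ≤ ∑ w : Fin (n + 1) → V, pi (w 0) ^ 2 *
          (∏ i : Fin n, (P ⊙ P) (w i.castSucc) (w i.succ)) * φ (w (Fin.last n)) := by
        rw [blockDelta, Finset.sum_mul]
        refine Finset.sum_le_sum fun w _ => ?_
        simp only [hadamard_apply, ← sq, Finset.prod_pow, wordProb, mul_pow]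
        exact mul_le_mul_of_nonneg_left (hu _) (by positivity)
    _ = (fun v => pi v ^ 2) ⬝ᵥ φ * lam ^ n := by
        refine (sum_prod_path_eq_dotProduct_pow_mulVec (P ⊙ P) φ n (fun v => pi v ^ 2)).trans ?_
        rw [pow_mulVec_of_mulVec_eq_smul heig, dotProduct_smul, smul_eq_mul, mul_comm]

theorem exists_exp_bound_of_le_mul_pow {a : ℕ → ℝ} {C lam : ℝ} (h0 : 0 < lam) (h1 : lam < 1)
    (ha : ∀ n, a n ≤ C * lam ^ n) :
    ∃ δ > (0 : ℝ), ∃ N : ℕ, ∀ n ≥ N, a n ≤ Real.exp (-δ * ((n : ℝ) + 1)) := by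
  set δ := -Real.log lam / 2 with hδ
  have hδpos : 0 < δ := by linarith [Real.log_neg h0 h1]
  have hpow : ∀ n : ℕ, lam ^ n = Real.exp (-2 * δ * n) := fun n => by
    rw [← Real.rpow_natCast, Real.rpow_def_of_pos h0, hδ]
    ring_nf
  have hC : ∀ᶠ n : ℕ in atTop, C ≤ Real.exp (δ * ((n : ℝ) - 1)) :=
    (Real.tendsto_exp_atTop.comp ((tendsto_atTop_add_const_right _ (-1)
      tendsto_natCast_atTop_atTop).const_mul_atTop hδpos)).eventually_ge_atTop C |>.mono
      fun n hn => by simpa [sub_eq_add_neg] using hn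
  obtain ⟨N, hN⟩ := eventually_atTop.1 hC
  refine ⟨δ, hδpos, N, fun n hn => (ha n).trans ?_⟩
  calc C * lam ^ n ≤ Real.exp (δ * ((n : ℝ) - 1)) * Real.exp (-2 * δ * n) := by
        rw [hpow]; exact mul_le_mul_of_nonneg_right (hN n hn) (Real.exp_pos _).le
    _ = Real.exp (-δ * ((n : ℝ) + 1)) := by rw [← Real.exp_add]; ring_nf

/-- `L(V,P) > 0` iff `|V| > 1`; and if `|V| > 1` then there is `δ > 0` with
`Δ_n ≤ e^{-δn}` for all sufficiently large `n` (blocks of length `n+1`). -/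
theorem L_positive_iff_nontrivial [Fintype V] [DecidableEq V] (P : Matrix V V ℝ)
    (hP : IsStochastic P) (hmix : IsMixing P) (pi : V → ℝ) (hpi : IsStationaryDist P pi)
    (lam : ℝ) (φ : V → ℝ) (hφ : ∀ v, 0 < φ v)
    (heig : ∀ u, ∑ v, (P u v) ^ 2 * φ v = lam * φ u) :
    (0 < -Real.log lam ↔ 1 < Fintype.card V) ∧
      (1 < Fintype.card V → ∃ δ > (0 : ℝ), ∃ N : ℕ, ∀ n ≥ N,
        blockDelta pi P n ≤ Real.exp (-δ * ((n : ℝ) + 1))) := by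
  have : Nonempty V := hpi.nonempty
  have hQ : (P ⊙ P) *ᵥ φ = lam • φ := funext fun u => by
    simpa only [mulVec, dotProduct, hadamard_apply, ← sq, Pi.smul_apply, smul_eq_mul] using heig u
  have hlam := hP.pos_of_hadamard_self_mulVec_eq_smul hφ hQ
  have hlt : 1 < Fintype.card V → lam < 1 := fun hV =>
    hmix.lt_one_of_hadamard_self_mulVec_eq_smul hP hV hφ hQ
  obtain ⟨C, hC⟩ := blockDelta_le_mul_pow pi hφ hQ
  refine ⟨⟨fun hL => ?_, fun hV => neg_pos.2 (Real.log_neg hlam (hlt hV))⟩,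
    fun hV => exists_exp_bound_of_le_mul_pow hlam (hlt hV) hC⟩
  by_contra hV
  have : Subsingleton V := Fintype.card_le_one_iff_subsingleton.1 (not_lt.1 hV)
  rw [hP.eq_one_of_hadamard_self_mulVec_eq_smul hφ hQ, Real.log_one, neg_zero] at hL
  exact hL.false
end
end
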